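/- Let ρ, r ∈ (0,1) with ρ ≤ r, and let g : 𝔻 → 𝔻 be analytic with g(0) = 0 and |g'(0)| = ρ. Then for all |z| ≤ r, |g(z)| ≤ 2r²/(1+r²) < r. -/

import Mathlib

open Complex Metric Set ComplexConjugate

/-!
Write `g z = z h(z)` with `h = dslope g 0`; by the Schwarz lemma `h` maps the disk into the closed
disk, and `h 0 = g'(0)` has modulus `ρ`. Composing `h` with the Blaschke factor that sends `h 0`
to `0` and applying the Schwarz lemma once more confines `h z` to a pseudo-hyperbolic disk, whence
`‖h z‖ ≤ (‖z‖ + ρ) / (1 + ‖z‖ ρ)`. This bound is increasing in `‖z‖` and in `ρ`, so for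
`‖z‖, ρ ≤ r` it is at most `2r / (1 + r²)`.
-/

lemma add_div_one_add_mul_le_of_le {x x' y : ℝ} (hx : 0 ≤ x) (hxx' : x ≤ x') (hy : 0 ≤ y)
    (hy1 : y ≤ 1) : (x + y) / (1 + x * y) ≤ (x' + y) / (1 + x' * y) := by
  rw [div_le_div_iff₀ (by positivity) (by nlinarith)]
  nlinarith [mul_nonneg (sub_nonneg.2 hxx') (sub_nonneg.2 (mul_le_one₀ hy1 hy hy1))]

lemma two_mul_sq_div_one_add_sq_lt {r : ℝ} (hr0 : 0 < r) (hr1 : r < 1) :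
    2 * r ^ 2 / (1 + r ^ 2) < r := by
  rw [div_lt_iff₀ (by positivity)]
  nlinarith [mul_pos hr0 (mul_pos (sub_pos.2 hr1) (sub_pos.2 hr1))]

namespace Complex

noncomputable def blaschkeFactor (a w : ℂ) : ℂ := (w - a) / (1 - conj a * w)

lemma normSq_one_sub_conj_mul_sub_normSq_sub (a w : ℂ) :
    normSq (1 - conj a * w) - normSq (w - a) = (1 - normSq a) * (1 - normSq w) := by
  simp only [normSq_apply, sub_re, sub_im, mul_re, mul_im, conj_re, conj_im, one_re, one_im]
  ring

lemma one_sub_conj_mul_ne_zero {a w : ℂ} (ha : ‖a‖ < 1) (hw : ‖w‖ ≤ 1) :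
    1 - conj a * w ≠ 0 := by
  refine sub_ne_zero.2 fun h => ?_
  have : ‖conj a * w‖ < 1 := by
    rw [norm_mul, RCLike.norm_conj]
    nlinarith [norm_nonneg a, norm_nonneg w]
  simp [← h] at this

lemma norm_blaschkeFactor_le_one {a w : ℂ} (ha : ‖a‖ < 1) (hw : ‖w‖ ≤ 1) :
    ‖blaschkeFactor a w‖ ≤ 1 := by
  rw [blaschkeFactor, norm_div, div_le_one (norm_pos_iff.2 (one_sub_conj_mul_ne_zero ha hw)),
    ← sq_le_sq₀ (norm_nonneg _) (norm_nonneg _), Complex.sq_norm, Complex.sq_norm, ← sub_nonneg,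
    normSq_one_sub_conj_mul_sub_normSq_sub, ← Complex.sq_norm, ← Complex.sq_norm]
  exact mul_nonneg (by nlinarith [norm_nonneg a]) (by nlinarith [norm_nonneg w])

/-- The pseudo-hyperbolic disk `{w | ‖blaschkeFactor a w‖ ≤ r}` is a Euclidean disk whose
farthest point from `0` has modulus `(r + ‖a‖) / (1 + r ‖a‖)`. -/
lemma norm_le_of_norm_blaschkeFactor_le {a w : ℂ} {r : ℝ} (ha : ‖a‖ < 1) (hw : ‖w‖ ≤ 1)
    (hr1 : r ≤ 1) (h : ‖blaschkeFactor a w‖ ≤ r) :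
    ‖w‖ ≤ (r + ‖a‖) / (1 + r * ‖a‖) := by
  have hden := one_sub_conj_mul_ne_zero ha hw
  have hr0 : 0 ≤ r := (norm_nonneg _).trans h
  rw [blaschkeFactor, norm_div, div_le_iff₀ (norm_pos_iff.2 hden)] at h
  have hsq : normSq (w - a) ≤ r ^ 2 * normSq (1 - conj a * w) := by
    rw [← Complex.sq_norm, ← Complex.sq_norm, ← mul_pow]
    exact pow_le_pow_left₀ (norm_nonneg _) h 2
  have hexp₁ : normSq (w - a) = ‖w‖ ^ 2 - 2 * (w * conj a).re + ‖a‖ ^ 2 := by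
    simp only [Complex.sq_norm, normSq_apply, sub_re, sub_im, mul_re, conj_re, conj_im]
    ring
  have hexp₂ : normSq (1 - conj a * w) = 1 - 2 * (w * conj a).re + ‖a‖ ^ 2 * ‖w‖ ^ 2 := by
    simp only [Complex.sq_norm, normSq_apply, sub_re, sub_im, mul_re, mul_im, conj_re, conj_im,
      one_re, one_im]
    ring
  have hre : (w * conj a).re ≤ ‖a‖ * ‖w‖ := by
    calc (w * conj a).re ≤ ‖w * conj a‖ := re_le_norm _
      _ = ‖a‖ * ‖w‖ := by rw [norm_mul, RCLike.norm_conj, mul_comm]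
  rw [hexp₁, hexp₂] at hsq
  set m := ‖w‖
  set ρ := ‖a‖
  -- the quadratic in `m` factors as `((1 + rρ) m - (r + ρ)) ((1 - rρ) m - (ρ - r)) ≤ 0`
  have hquad : ((1 + r * ρ) * m - (r + ρ)) * ((1 - r * ρ) * m - (ρ - r)) ≤ 0 := by
    nlinarith [mul_le_mul_of_nonneg_left hre (show 0 ≤ 1 - r ^ 2 by nlinarith)]
  rw [le_div_iff₀ (by positivity)]
  by_contra! hcon
  have hρ0 : 0 ≤ ρ := norm_nonneg a
  have hrρ : r * ρ < 1 := by nlinarith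
  have hscaled : 0 < (1 + r * ρ) * ((1 - r * ρ) * m - (ρ - r)) := by
    nlinarith [mul_lt_mul_of_pos_left hcon (sub_pos.2 hrρ), mul_nonneg hr0 (sub_nonneg.2 ha.le)]
  have hsecond := pos_of_mul_pos_right hscaled (by positivity)
  nlinarith

lemma norm_le_add_div_one_add_mul_of_mapsTo_ball {f : ℂ → ℂ}
    (hf : DifferentiableOn ℂ f (ball 0 1)) (hmaps : MapsTo f (ball 0 1) (closedBall 0 1))
    (hf0 : ‖f 0‖ < 1) {z : ℂ} (hz : ‖z‖ < 1) :
    ‖f z‖ ≤ (‖z‖ + ‖f 0‖) / (1 + ‖z‖ * ‖f 0‖) := by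
  have hf_le : ∀ w ∈ ball (0 : ℂ) 1, ‖f w‖ ≤ 1 := fun w hw => mem_closedBall_zero_iff.1 (hmaps hw)
  have hF : DifferentiableOn ℂ (fun w => blaschkeFactor (f 0) (f w)) (ball 0 1) :=
    (hf.sub_const _).div ((differentiableOn_const _).sub ((differentiableOn_const _).mul hf))
      fun w hw => one_sub_conj_mul_ne_zero hf0 (hf_le w hw)
  have hF_maps : MapsTo (fun w => blaschkeFactor (f 0) (f w)) (ball 0 1) (closedBall 0 1) :=
    fun w hw => mem_closedBall_zero_iff.2 (norm_blaschkeFactor_le_one hf0 (hf_le w hw))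
  have hF0 : blaschkeFactor (f 0) (f 0) = 0 := by simp [blaschkeFactor]
  exact norm_le_of_norm_blaschkeFactor_le hf0 (hf_le z (mem_ball_zero_iff.2 hz)) hz.le
    (norm_le_norm_of_mapsTo_ball hF hF_maps hF0 hz)

end Complex

/-- Uniform Schwarz Lemma, second part: if moreover `ρ ≤ r`, then
`‖g z‖ ≤ 2r²/(1+r²) < r` for all `‖z‖ ≤ r`. -/
theorem uniform_schwarz_rho_le_r (ρ r : ℝ) (hρ : ρ ∈ Set.Ioo (0:ℝ) 1)
    (hr : r ∈ Set.Ioo (0:ℝ) 1) (hρr : ρ ≤ r)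
    (g : ℂ → ℂ) (hg : DifferentiableOn ℂ g (ball (0:ℂ) 1))
    (hmaps : Set.MapsTo g (ball (0:ℂ) 1) (ball (0:ℂ) 1))
    (hg0 : g 0 = 0) (hg' : ‖deriv g 0‖ = ρ) :
    (∀ z : ℂ, ‖z‖ ≤ r → ‖g z‖ ≤ 2 * r ^ 2 / (1 + r ^ 2)) ∧
      2 * r ^ 2 / (1 + r ^ 2) < r := by
  obtain ⟨hρ0, hρ1⟩ := hρ
  obtain ⟨hr0, hr1⟩ := hr
  refine ⟨fun z hz => ?_, two_mul_sq_div_one_add_sq_lt hr0 hr1⟩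
  set h := dslope g 0
  have hh : DifferentiableOn ℂ h (ball 0 1) :=
    (differentiableOn_dslope (isOpen_ball.mem_nhds (mem_ball_self one_pos))).2 hg
  have hh_maps : MapsTo h (ball 0 1) (closedBall 0 1) := fun w hw => by
    simpa using norm_dslope_le_div_of_mapsTo_ball hg
      (by rw [hg0]; exact hmaps.mono_right ball_subset_closedBall) hw
  have hh0 : ‖h 0‖ = ρ := by rw [show h 0 = deriv g 0 from dslope_same g 0, hg']
  have hgz : g z = z * h z := by simpa [hg0] using (sub_smul_dslope g 0 z).symm
  have hhz : ‖h z‖ ≤ 2 * r / (1 + r ^ 2) := calc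
    ‖h z‖ ≤ (‖z‖ + ρ) / (1 + ‖z‖ * ρ) :=
      hh0 ▸ norm_le_add_div_one_add_mul_of_mapsTo_ball hh hh_maps (hh0 ▸ hρ1) (hz.trans_lt hr1)
    _ ≤ (r + ρ) / (1 + r * ρ) := add_div_one_add_mul_le_of_le (norm_nonneg z) hz hρ0.le hρ1.le
    _ = (ρ + r) / (1 + ρ * r) := by rw [add_comm r, mul_comm r]
    _ ≤ (r + r) / (1 + r * r) := add_div_one_add_mul_le_of_le hρ0.le hρr hr0.le hr1.le
    _ = 2 * r / (1 + r ^ 2) := by ring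
  calc ‖g z‖ = ‖z‖ * ‖h z‖ := by rw [hgz, norm_mul]
    _ ≤ r * (2 * r / (1 + r ^ 2)) := by gcongr
    _ = 2 * r ^ 2 / (1 + r ^ 2) := by ring
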